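/- Let (β_n) be a sequence of positive reals with n² β_n → ∞ and n β_n → 0 as n → ∞, and let (z_n) be a sequence of reals with z_n → ∞ and β_n log z_n → 0. Define S_n(z_n) := Σ_{i=1}^{n} Q( i β_n/2 , z_n²/2 ), where Q(a,z) = (1/Γ(a)) ∫_z^∞ t^{a−1} e^{−t} dt, and Λ_n := n( (z_n²/2)^{β_n/2} − 1 ) (z_n²/2)^{n β_n/2} − (z_n²/2)^{n β_n/2} + 1. Then S_n(z_n) is asymptotically equivalent to ( 4 e^{−z_n²/2} / z_n² ) · Λ_n / ( β_n log²(z_n²/2) ), i.e. the ratio of the two quantities converges to 1 as n → ∞. -/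

import Mathlib

open Filter Real

/-- The regularized upper incomplete Gamma function
`Q(a,z) = (1/Γ(a)) ∫_z^∞ t^(a-1) e^(-t) dt`. -/
noncomputable def regIncGamma (a z : ℝ) : ℝ :=
  (1 / Real.Gamma a) * ∫ t in Set.Ioi z, t ^ (a - 1) * Real.exp (-t)

/-!
For `0 < a ≤ 1` and `t > x > 0` we have
`x ^ (a - 1) ≥ t ^ (a - 1) ≥ x ^ (a - 1) * exp (1 - t / x)`, so `∫_x^∞ t^(a-1) e^(-t) dt` lies
between `x / (x + 1)` and `1` times `x^(a-1) e^(-x)`. As `1 / Γ(a) = a / Γ(1 + a)` and convexity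
of `Γ` gives `1 - 2a ≤ Γ(1 + a) ≤ 1`, we get `Q(a, x) ≈ a x^(a-1) e^(-x)` uniformly for
`a ≤ nβ_n / 2 → 0`. Summed over `a = iβ/2`, the right-hand side is an arithmetico-geometric sum in
`r = x^(β/2) = e^ε`, `ε = (β/2) log x`, whose closed form is `ε² e^ε / (e^ε - 1)²` times the
claimed equivalent; this factor tends to `1` because `ε = β log z - (β/2) log 2 → 0`.
-/

open Set MeasureTheory Topology

theorem sum_Icc_natCast_mul_pow_mul_sub_one_sq {R : Type*} [CommRing R] (r : R) (n : ℕ) :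
    (∑ i ∈ Finset.Icc 1 n, (i : R) * r ^ i) * (r - 1) ^ 2
      = r * (n * (r - 1) * r ^ n - r ^ n + 1) := by
  induction n with
  | zero => simp
  | succ n ih =>
    rw [Finset.sum_Icc_succ_top (Nat.le_add_left 1 n), add_mul, ih]
    push_cast
    ring

namespace Real

theorem Gamma_one_add_le_one {a : ℝ} (h0 : 0 ≤ a) (h1 : a ≤ 1) : Gamma (1 + a) ≤ 1 := by
  have := convexOn_Gamma.le_max_of_mem_Icc (x := 1) (y := 2) (z := 1 + a)
    (mem_Ioi.2 one_pos) (mem_Ioi.2 two_pos) ⟨by linarith, by linarith⟩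
  rwa [Gamma_one, Gamma_two, max_self] at this

theorem one_sub_two_mul_le_Gamma_one_add {a : ℝ} (ha : 0 < a) : 1 - 2 * a ≤ Gamma (1 + a) := by
  have hslope := convexOn_Gamma.slope_mono_adjacent (x := 1 / 2) (y := 1) (z := 1 + a)
    (by norm_num) (by simp; linarith) (by norm_num) (by linarith)
  have hsqrt : √π ≤ 2 := by
    rw [sqrt_le_left (by norm_num)]
    linarith [pi_lt_four]
  rw [Gamma_one, Gamma_one_half_eq, add_sub_cancel_left, div_le_div_iff₀ (by norm_num) ha]
    at hslope
  nlinarith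

end Real

theorem integral_Ioi_rpow_mul_exp_neg_le {a x : ℝ} (hx : 0 < x) (ha : a ≤ 1) :
    ∫ t in Ioi x, t ^ (a - 1) * exp (-t) ≤ x ^ (a - 1) * exp (-x) := by
  calc ∫ t in Ioi x, t ^ (a - 1) * exp (-t)
      ≤ ∫ t in Ioi x, x ^ (a - 1) * exp (-t) := by
        have hint : IntegrableOn (fun t => exp (-t)) (Ioi x) := by
          simpa using exp_neg_integrableOn_Ioi x one_pos
        refine setIntegral_mono_of_nonneg (fun t ht => ?_) (fun t ht => ?_) (hint.const_mul _)
        · have : 0 < t := hx.trans ht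
          positivity
        · exact mul_le_mul_of_nonneg_right
            (rpow_le_rpow_of_nonpos hx (le_of_lt ht) (by linarith)) (exp_nonneg _)
    _ = x ^ (a - 1) * exp (-x) := by rw [integral_const_mul, integral_exp_neg_Ioi]

theorem le_integral_Ioi_rpow_mul_exp_neg {a x : ℝ} (hx : 0 < x) (ha : 0 < a) :
    x / (x + 1) * (x ^ (a - 1) * exp (-x)) ≤ ∫ t in Ioi x, t ^ (a - 1) * exp (-t) := by
  have hpt : ∀ t ∈ Ioi x,
      x ^ (a - 1) * exp 1 * exp (-(1 + x⁻¹) * t) ≤ t ^ (a - 1) * exp (-t) := by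
    intro t ht
    have ht0 : 0 < t := hx.trans ht
    have hexp : exp 1 * exp (-(1 + x⁻¹) * t) = exp (-(t / x - 1)) * exp (-t) := by
      rw [← exp_add, ← exp_add]; congr 1; ring
    have h1 : exp (-(t / x - 1)) ≤ x / t := by
      rw [exp_neg, inv_le_comm₀ (exp_pos _) (by positivity), inv_div]
      linarith [add_one_le_exp (t / x - 1)]
    have h2 : x ^ (a - 1) * (x / t) ≤ t ^ (a - 1) := by
      rw [rpow_sub_one hx.ne', rpow_sub_one ht0.ne', div_mul_div_comm, mul_comm x t,
        mul_div_mul_right _ _ hx.ne']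
      exact div_le_div_of_nonneg_right (rpow_le_rpow hx.le (le_of_lt ht) ha.le) ht0.le
    rw [mul_assoc, hexp, ← mul_assoc]
    gcongr
    exact (mul_le_mul_of_nonneg_left h1 (by positivity)).trans h2
  have hint : IntegrableOn (fun t : ℝ => t ^ (a - 1) * exp (-t)) (Ioi x) :=
    ((GammaIntegral_convergent ha).mono_set (Ioi_subset_Ioi hx.le)).congr_fun
      (fun t _ => mul_comm _ _) measurableSet_Ioi
  calc x / (x + 1) * (x ^ (a - 1) * exp (-x))
      = ∫ t in Ioi x, x ^ (a - 1) * exp 1 * exp (-(1 + x⁻¹) * t) := by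
        rw [integral_const_mul, integral_exp_mul_Ioi (by linarith [inv_pos.2 hx])]
        have he : exp 1 * exp (-(1 + x⁻¹) * x) = exp (-x) := by
          rw [← exp_add]; congr 1; field_simp; ring
        rw [neg_div_neg_eq, mul_div_assoc', mul_assoc, he]
        field_simp
    _ ≤ ∫ t in Ioi x, t ^ (a - 1) * exp (-t) :=
        setIntegral_mono_of_nonneg (fun t ht => by positivity) hpt hint

theorem regIncGamma_eq_div_Gamma_one_add_mul {a : ℝ} (ha : 0 < a) (x : ℝ) :
    regIncGamma a x = a / Gamma (1 + a) * ∫ t in Ioi x, t ^ (a - 1) * exp (-t) := by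
  rw [regIncGamma, add_comm, Gamma_add_one ha.ne', div_mul_cancel_left₀ ha.ne', one_div]

theorem integral_Ioi_rpow_mul_exp_neg_nonneg (a : ℝ) {x : ℝ} (hx : 0 ≤ x) :
    0 ≤ ∫ t in Ioi x, t ^ (a - 1) * exp (-t) :=
  setIntegral_nonneg measurableSet_Ioi fun t ht => by
    have : 0 < t := hx.trans_lt ht
    positivity

theorem le_regIncGamma {a x : ℝ} (hx : 0 < x) (ha0 : 0 < a) (ha1 : a ≤ 1) :
    x / (x + 1) * (a * x ^ (a - 1) * exp (-x)) ≤ regIncGamma a x := by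
  have hΓ : 0 < Gamma (1 + a) := Gamma_pos_of_pos (by linarith)
  have ha : a ≤ a / Gamma (1 + a) :=
    le_div_self ha0.le hΓ (Gamma_one_add_le_one ha0.le ha1)
  rw [regIncGamma_eq_div_Gamma_one_add_mul ha0]
  calc x / (x + 1) * (a * x ^ (a - 1) * exp (-x))
      = a * (x / (x + 1) * (x ^ (a - 1) * exp (-x))) := by ring
    _ ≤ a * ∫ t in Ioi x, t ^ (a - 1) * exp (-t) := by
        gcongr; exact le_integral_Ioi_rpow_mul_exp_neg hx ha0
    _ ≤ a / Gamma (1 + a) * ∫ t in Ioi x, t ^ (a - 1) * exp (-t) := by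
        gcongr; exact integral_Ioi_rpow_mul_exp_neg_nonneg a hx.le

theorem regIncGamma_le {a x : ℝ} (hx : 0 < x) (ha0 : 0 < a) (ha : 2 * a < 1) :
    regIncGamma a x ≤ a * x ^ (a - 1) * exp (-x) / (1 - 2 * a) := by
  rw [regIncGamma_eq_div_Gamma_one_add_mul ha0]
  calc a / Gamma (1 + a) * ∫ t in Ioi x, t ^ (a - 1) * exp (-t)
      ≤ a / (1 - 2 * a) * ∫ t in Ioi x, t ^ (a - 1) * exp (-t) := by
        refine mul_le_mul_of_nonneg_right ?_ (integral_Ioi_rpow_mul_exp_neg_nonneg a hx.le)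
        exact div_le_div_of_nonneg_left ha0.le (by linarith) (one_sub_two_mul_le_Gamma_one_add ha0)
    _ ≤ a / (1 - 2 * a) * (x ^ (a - 1) * exp (-x)) := by
        have : 0 < 1 - 2 * a := by linarith
        gcongr
        exact integral_Ioi_rpow_mul_exp_neg_le hx (by linarith)
    _ = a * x ^ (a - 1) * exp (-x) / (1 - 2 * a) := by ring

theorem sum_regIncGamma_mem_Icc {n : ℕ} {b x : ℝ} (hx : 0 < x) (hb : 0 < b) (hnb : n * b < 1) :
    ∑ i ∈ Finset.Icc 1 n, regIncGamma (i * b / 2) x ∈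
      Icc (x / (x + 1) * ∑ i ∈ Finset.Icc 1 n, i * b / 2 * x ^ (i * b / 2 - 1) * exp (-x))
        ((∑ i ∈ Finset.Icc 1 n, i * b / 2 * x ^ (i * b / 2 - 1) * exp (-x)) / (1 - n * b)) := by
  rw [Finset.mul_sum, Finset.sum_div]
  have hnb' : 0 < 1 - n * b := by linarith
  have hterm : ∀ i ∈ Finset.Icc 1 n,
      0 < (i : ℝ) * b / 2 ∧ 2 * ((i : ℝ) * b / 2) ≤ n * b := by
    intro i hi
    obtain ⟨hi1, hin⟩ := Finset.mem_Icc.1 hi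
    have hi : (1 : ℝ) ≤ i := by exact_mod_cast hi1
    have hib : i * b ≤ n * b := by gcongr
    exact ⟨by positivity, by linarith⟩
  refine ⟨Finset.sum_le_sum fun i hi => ?_, Finset.sum_le_sum fun i hi => ?_⟩ <;>
    obtain ⟨ha, hab⟩ := hterm i hi
  · exact le_regIncGamma hx ha (by linarith)
  · refine (regIncGamma_le hx ha (by linarith)).trans ?_
    exact div_le_div_of_nonneg_left (by positivity) hnb' (by linarith)

theorem sum_mul_rpow_mul_exp_neg_mul_sq (n : ℕ) (b : ℝ) {x : ℝ} (hx : 0 < x) :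
    (∑ i ∈ Finset.Icc 1 n, i * b / 2 * x ^ (i * b / 2 - 1) * exp (-x)) * (x ^ (b / 2) - 1) ^ 2
      = b / 2 * exp (-x) / x * x ^ (b / 2)
        * (n * (x ^ (b / 2) - 1) * x ^ (n * b / 2) - x ^ (n * b / 2) + 1) := by
  have hpow : ∀ k : ℕ, x ^ (k * b / 2) = (x ^ (b / 2)) ^ k := fun k => by
    rw [← rpow_natCast, ← rpow_mul hx.le]; ring_nf
  have hterm : ∀ i ∈ Finset.Icc 1 n, i * b / 2 * x ^ (i * b / 2 - 1) * exp (-x)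
      = b / 2 * exp (-x) / x * (i * (x ^ (b / 2)) ^ i) := fun i _ => by
    rw [rpow_sub hx, rpow_one, hpow]; ring
  rw [Finset.sum_congr rfl hterm, ← Finset.mul_sum, mul_assoc,
    sum_Icc_natCast_mul_pow_mul_sub_one_sq, hpow]
  ring

theorem sum_mul_rpow_mul_exp_neg_eq (n : ℕ) {b x : ℝ} (hb : 0 < b) (hx : 1 < x) :
    ∑ i ∈ Finset.Icc 1 n, i * b / 2 * x ^ (i * b / 2 - 1) * exp (-x)
      = (b / 2 * log x) ^ 2 * exp (b / 2 * log x) / (exp (b / 2 * log x) - 1) ^ 2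
        * (2 * exp (-x) / x
          * ((n * (x ^ (b / 2) - 1) * x ^ (n * b / 2) - x ^ (n * b / 2) + 1)
            / (b * log x ^ 2))) := by
  have hx0 : 0 < x := one_pos.trans hx
  have hlog : 0 < log x := log_pos hx
  have hr : exp (b / 2 * log x) = x ^ (b / 2) := by rw [rpow_def_of_pos hx0, mul_comm]
  have hr1 : x ^ (b / 2) - 1 ≠ 0 :=
    sub_ne_zero.2 (one_lt_rpow hx (by positivity)).ne'
  have h := sum_mul_rpow_mul_exp_neg_mul_sq n b hx0
  rw [← eq_div_iff (pow_ne_zero 2 hr1)] at h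
  rw [h, hr]
  field_simp

theorem tendsto_sq_mul_exp_div_exp_sub_one_sq :
    Tendsto (fun ε : ℝ => ε ^ 2 * exp ε / (exp ε - 1) ^ 2) (𝓝[≠] 0) (𝓝 1) := by
  have hslope : Tendsto (slope exp 0) (𝓝[≠] 0) (𝓝 1) := by
    simpa using (hasDerivAt_exp 0).tendsto_slope
  have hexp : Tendsto exp (𝓝[≠] 0) (𝓝 1) := by
    simpa using (continuous_exp.tendsto 0).mono_left nhdsWithin_le_nhds
  have h : Tendsto (fun ε => exp ε / slope exp 0 ε ^ 2) (𝓝[≠] 0) (𝓝 1) := by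
    have := hexp.div (hslope.pow 2) (by norm_num)
    rwa [one_pow, div_one] at this
  refine h.congr' ?_
  filter_upwards [self_mem_nhdsWithin] with ε (hε : ε ≠ 0)
  rw [slope_def_field, exp_zero, sub_zero]
  field_simp

theorem tendsto_div_add_one_atTop : Tendsto (fun x : ℝ => x / (x + 1)) atTop (𝓝 1) := by
  have h : Tendsto (fun x : ℝ => 1 - (x + 1)⁻¹) atTop (𝓝 1) := by
    simpa using (tendsto_inv_atTop_zero.comp
      (tendsto_atTop_add_const_right _ 1 tendsto_id)).const_sub (1 : ℝ)
  refine h.congr' ?_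
  filter_upwards [eventually_gt_atTop 0] with x hx
  field_simp
  ring

theorem tendsto_half_mul_log_sq_div_two {ι : Type*} {l : Filter ι} {β z : ι → ℝ}
    (hβpos : ∀ n, 0 < β n) (hβ : Tendsto β l (𝓝 0)) (hz : Tendsto z l atTop)
    (hβz : Tendsto (fun n => β n * log (z n)) l (𝓝 0)) :
    Tendsto (fun n => β n / 2 * log (z n ^ 2 / 2)) l (𝓝[≠] 0) := by
  refine tendsto_nhdsWithin_iff.2 ⟨?_, ?_⟩
  · have h : Tendsto (fun n => β n * log (z n) - log 2 / 2 * β n) l (𝓝 0) := by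
      simpa using hβz.sub (hβ.const_mul (log 2 / 2))
    refine h.congr' ?_
    filter_upwards [hz.eventually_gt_atTop 0] with n hn
    rw [log_div (by positivity) two_ne_zero, log_pow]
    push_cast
    ring
  · filter_upwards [hz.eventually_gt_atTop 2] with n hn
    have : 1 < z n ^ 2 / 2 := by nlinarith
    exact (mul_pos (half_pos (hβpos n)) (log_pos this)).ne'

theorem sum_regIncGamma_div_mem_Icc {n : ℕ} {b x : ℝ} (hn : 1 ≤ n) (hb : 0 < b)
    (hnb : n * b < 1) (hx : 1 < x) :
    (∑ i ∈ Finset.Icc 1 n, regIncGamma (i * b / 2) x)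
        / (2 * exp (-x) / x
          * ((n * (x ^ (b / 2) - 1) * x ^ (n * b / 2) - x ^ (n * b / 2) + 1) / (b * log x ^ 2)))
      ∈ Icc
        (x / (x + 1) * ((b / 2 * log x) ^ 2 * exp (b / 2 * log x) / (exp (b / 2 * log x) - 1) ^ 2))
        ((b / 2 * log x) ^ 2 * exp (b / 2 * log x) / (exp (b / 2 * log x) - 1) ^ 2
          / (1 - n * b)) := by
  have hx0 : 0 < x := one_pos.trans hx
  set g := (b / 2 * log x) ^ 2 * exp (b / 2 * log x) / (exp (b / 2 * log x) - 1) ^ 2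
  set T := 2 * exp (-x) / x
    * ((n * (x ^ (b / 2) - 1) * x ^ (n * b / 2) - x ^ (n * b / 2) + 1) / (b * log x ^ 2))
  have hM := sum_mul_rpow_mul_exp_neg_eq n hb hx
  have hMpos : 0 < ∑ i ∈ Finset.Icc 1 n, i * b / 2 * x ^ (i * b / 2 - 1) * exp (-x) := by
    refine Finset.sum_pos (fun i hi => ?_) ⟨1, Finset.mem_Icc.2 ⟨le_rfl, hn⟩⟩
    have : (0 : ℝ) < i := by exact_mod_cast (Finset.mem_Icc.1 hi).1
    positivity
  have hε : 0 < b / 2 * log x := by have := log_pos hx; positivity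
  have hg : 0 < g := div_pos (by positivity) (pow_pos (sub_pos.2 (one_lt_exp_iff.2 hε)) 2)
  have hT : 0 < T := pos_of_mul_pos_right (hM ▸ hMpos) hg.le
  obtain ⟨hlo, hhi⟩ := sum_regIncGamma_mem_Icc hx0 hb hnb
  rw [hM] at hlo hhi
  constructor
  · rw [le_div_iff₀ hT, mul_assoc]
    exact hlo
  · rw [div_le_iff₀ hT, div_mul_eq_mul_div]
    exact hhi

theorem sum_survival_intermediate_asymptotic_general (β : ℕ → ℝ) (hβpos : ∀ n, 0 < β n)
    (hβ2 : Tendsto (fun n : ℕ => (n : ℝ) * β n) atTop (nhds 0))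
    (z : ℕ → ℝ) (hz : Tendsto z atTop atTop)
    (hβz : Tendsto (fun n : ℕ => β n * Real.log (z n)) atTop (nhds 0)) :
    Tendsto (fun n : ℕ =>
        (∑ i ∈ Finset.Icc 1 n, regIncGamma ((i : ℝ) * β n / 2) (z n ^ 2 / 2))
          / (4 * Real.exp (-(z n ^ 2) / 2) / z n ^ 2
              * (((n : ℝ) * ((z n ^ 2 / 2) ^ (β n / 2) - 1) * (z n ^ 2 / 2) ^ ((n : ℝ) * β n / 2)
                    - (z n ^ 2 / 2) ^ ((n : ℝ) * β n / 2) + 1)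
                  / (β n * Real.log (z n ^ 2 / 2) ^ 2))))
      atTop (nhds 1) := by
  have hx : Tendsto (fun n => z n ^ 2 / 2) atTop atTop :=
    ((tendsto_pow_atTop two_ne_zero).comp hz).atTop_div_const two_pos
  have hβ : Tendsto β atTop (𝓝 0) := by
    refine (hβ2.div_atTop tendsto_natCast_atTop_atTop).congr' ?_
    filter_upwards [eventually_ne_atTop 0] with n hn
    field_simp
  have hε := tendsto_half_mul_log_sq_div_two hβpos hβ hz hβz
  have hg := tendsto_sq_mul_exp_div_exp_sub_one_sq.comp hε
  have hlow := (tendsto_div_add_one_atTop.comp hx).mul hg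
  have hupp := hg.div (hβ2.const_sub 1) (by norm_num)
  rw [one_mul] at hlow
  rw [sub_zero, div_one] at hupp
  have hT : ∀ n : ℕ,
      4 * exp (-(z n ^ 2) / 2) / z n ^ 2 = 2 * exp (-(z n ^ 2 / 2)) / (z n ^ 2 / 2) :=
    fun n => by rw [neg_div]; ring
  simp only [hT]
  have hgood : ∀ᶠ n : ℕ in atTop, 1 ≤ n ∧ (n : ℝ) * β n < 1 ∧ 1 < z n ^ 2 / 2 :=
    (eventually_ge_atTop 1).and
      ((hβ2.eventually (gt_mem_nhds one_pos)).and (hx.eventually_gt_atTop 1))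
  refine tendsto_of_tendsto_of_tendsto_of_le_of_le' hlow hupp
    (hgood.mono fun n h => ?_) (hgood.mono fun n h => ?_)
  exacts [(sum_regIncGamma_div_mem_Icc h.1 (hβpos n) h.2.1 h.2.2).1,
    (sum_regIncGamma_div_mem_Icc h.1 (hβpos n) h.2.1 h.2.2).2]

/-- **Intermediate asymptotic, valid throughout the regime `1/n² ≪ β ≪ 1/n`:**
if `z_n → ∞` and `β_n log z_n → 0`, then
`S_n(z_n) = Σ_{i=1}^n Q(iβ_n/2, z_n²/2)` is asymptotically equivalent to
`(4 e^{-z_n²/2} / z_n²) · Λ_n / (β_n log²(z_n²/2))` where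
`Λ_n = n((z_n²/2)^(β_n/2) − 1)(z_n²/2)^(nβ_n/2) − (z_n²/2)^(nβ_n/2) + 1`. -/
theorem sum_survival_intermediate_asymptotic (β : ℕ → ℝ) (hβpos : ∀ n, 0 < β n)
    (hβ1 : Tendsto (fun n : ℕ => (n : ℝ) ^ 2 * β n) atTop atTop)
    (hβ2 : Tendsto (fun n : ℕ => (n : ℝ) * β n) atTop (nhds 0))
    (z : ℕ → ℝ) (hz : Tendsto z atTop atTop)
    (hβz : Tendsto (fun n : ℕ => β n * Real.log (z n)) atTop (nhds 0)) :
    Tendsto (fun n : ℕ =>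
        (∑ i ∈ Finset.Icc 1 n, regIncGamma ((i : ℝ) * β n / 2) (z n ^ 2 / 2))
          / (4 * Real.exp (-(z n ^ 2) / 2) / z n ^ 2
              * (((n : ℝ) * ((z n ^ 2 / 2) ^ (β n / 2) - 1) * (z n ^ 2 / 2) ^ ((n : ℝ) * β n / 2)
                    - (z n ^ 2 / 2) ^ ((n : ℝ) * β n / 2) + 1)
                  / (β n * Real.log (z n ^ 2 / 2) ^ 2))))
      atTop (nhds 1) :=
  sum_survival_intermediate_asymptotic_general β hβpos hβ2 z hz hβz
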